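/- Let k be a commutative ring, V a free k-module of finite rank, R = Sym(V*) viewed as a dg-algebra with trivial differential and generators in cohomological degree 2, and Λ the exterior algebra of V*. Let M be a dg-module over R with H^n(M) = 0 for all n < 0. Then the morphism of dg-k-modules M → Λ ⊗_k M, m ↦ 1 ⊗ m, induces an isomorphism H^0(M) ≅ H^0(Λ ⊗_k M), where Λ ⊗_k M carries the Koszul differential. -/

import Mathlib

/-!
# Statement 15

Let `k` be a commutative ring, `V` a free `k`-module of finite rank `m`, `R = Sym(V^*)`
regarded as a dg-algebra with trivial differential and generators in cohomological degree `2`,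
and `Λ` the exterior algebra of `V^*` (with `Λ^p` in cohomological degree `p`).  Let `M` be a
dg-module over `R` with `H^n(M) = 0` for `n < 0`.  Then the morphism of dg-`k`-modules
`M → Λ ⊗_k M`, `x ↦ 1 ⊗ x`, induces an isomorphism `H^0(M) ≅ H^0(Λ ⊗_k M)`, where `Λ ⊗_k M`
carries the Koszul differential.

A dg-module over `R = Sym(V^*)` (with trivial differential) is the same thing as a complex
`(M, d)` of `k`-modules together with `m` pairwise commuting degree-`2` endomorphisms
`θ_1, …, θ_m` commuting with `d` (the actions of a basis `e_1, …, e_m` of `V^*`).  We realize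
`M` as a `ℤ`-graded `k`-module `(Mt, gM)` and `Λ ⊗_k M` as the graded module
`Koszul := Finset (Fin m) → Mt`, the component at `s ⊆ {1,…,m}` being `e_s ⊗ M` (so the
degree-`n` part of `Λ ⊗ M` is `koszulGrading gM n`, whose component at `s` is `M^{n-|s|}`);
the Koszul differential is `koszulD d θ`, and the map `x ↦ 1 ⊗ x` is
`LinearMap.single _ _ ∅`.  The conclusion `H^0(M) ≅ H^0(Λ ⊗ M)` is unfolded into: the map
sends `0`-cocycles to `0`-cocycles and is injective and surjective on `H^0`.
-/

open Finset

variable {k : Type*} [CommRing k] {m : ℕ}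
variable {Mt : Type*} [AddCommGroup Mt] [Module k Mt]

/-- The underlying `k`-module of `Λ ⊗_k M` for a chosen basis `e_1, …, e_m` of `V^*`:
the component at `s ⊆ {1, …, m}` corresponds to `e_s ⊗ M`. -/
abbrev Koszul (k : Type*) (Mt : Type*) [CommRing k] [AddCommGroup Mt] [Module k Mt]
    (m : ℕ) : Type _ :=
  Finset (Fin m) → Mt

/-- The Koszul differential on `Λ ⊗_k M`:
`d(e_{j_1} ∧ ⋯ ∧ e_{j_p} ⊗ x) = ∑_i (−1)^{i−1} e_{j_1} ∧ ⋯ ∧ ê_{j_i} ∧ ⋯ ∧ e_{j_p} ⊗ θ_{j_i} x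
 + (−1)^p e_{j_1} ∧ ⋯ ∧ e_{j_p} ⊗ d x`. -/
def koszulD (d : Mt →ₗ[k] Mt) (θ : Fin m → (Mt →ₗ[k] Mt)) :
    Koszul k Mt m →ₗ[k] Koszul k Mt m where
  toFun f s :=
    (∑ j ∈ univ.filter (fun j : Fin m => j ∉ s),
        ((-1 : k) ^ (s.filter (fun i => i < j)).card) • θ j (f (insert j s)))
      + ((-1 : k) ^ s.card) • d (f s)
  map_add' f g := by
    funext s
    simp only [Pi.add_apply, map_add, smul_add, Finset.sum_add_distrib]
    abel
  map_smul' c f := by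
    funext s
    simp only [Pi.smul_apply, map_smul, RingHom.id_apply, smul_add, Finset.smul_sum,
      smul_smul, mul_comm c]

/-- The cohomological grading on `Λ ⊗_k M`: in degree `n`, the component at `s` is
`M^{n − |s|}`. -/
def koszulGrading (gM : ℤ → Submodule k Mt) (n : ℤ) : Submodule k (Koszul k Mt m) :=
  Submodule.pi Set.univ fun s : Finset (Fin m) => gM (n - s.card)

/-!
Split the Koszul differential as `D = K + δ`, where `δ = ±d` preserves the exterior degree `|s|`
and `K`, built from the `θ_j`, lowers it by one; `D² = 0` because `K² = 0`, `Kδ + δK = 0` and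
`δ² = 0`. Let `f` have degree `n ≤ 0` with `D f` concentrated in exterior degree `0`. If its top
component `f_s`, `|s| = p ≥ 1`, is nonzero, then the `s`-component of `D f` is `±d f_s`, so `f_s`
is a cocycle of `M` in degree `n - p < 0`, hence a boundary `d y_s`; subtracting `D` of the
element with components `±y_s` kills the components of exterior degree `p`. By induction, `f` is
cohomologous to an element of `1 ⊗ M`. For `n = 0` this is surjectivity on `H^0`, and for
`n = -1`, applied to a primitive of `1 ⊗ x`, injectivity.
-/

section Square

variable (k) in
def koszulSign (s : Finset (Fin m)) (j : Fin m) : k := (-1) ^ #(s.filter (· < j))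

lemma koszulSign_insert {i j : Fin m} {s : Finset (Fin m)} (hj : j ∉ s) :
    koszulSign k (insert j s) i = if j < i then -koszulSign k s i else koszulSign k s i := by
  unfold koszulSign
  rw [filter_insert]
  split_ifs with h
  · rw [card_insert_of_notMem fun hmem => hj (mem_filter.mp hmem).1, pow_succ, mul_neg_one]
  · rfl

lemma koszulSign_mul_add_koszulSign_mul {i j : Fin m} {s : Finset (Fin m)} (hij : i ≠ j)
    (hi : i ∉ s) (hj : j ∉ s) :
    koszulSign k s j * koszulSign k (insert j s) i
      + koszulSign k s i * koszulSign k (insert i s) j = 0 := by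
  rw [koszulSign_insert hj, koszulSign_insert hi]
  rcases hij.lt_or_gt with h | h
  · rw [if_neg h.not_gt, if_pos h]; ring
  · rw [if_pos h, if_neg h.not_gt]; ring

variable (d : Mt →ₗ[k] Mt) (θ : Fin m → (Mt →ₗ[k] Mt))

def koszulContract : Koszul k Mt m →ₗ[k] Koszul k Mt m :=
  LinearMap.pi fun s =>
    ∑ j ∈ univ.filter (· ∉ s), koszulSign k s j • θ j ∘ₗ LinearMap.proj (insert j s)

def koszulInternal : Koszul k Mt m →ₗ[k] Koszul k Mt m :=
  LinearMap.pi fun s => (-1 : k) ^ #s • d ∘ₗ LinearMap.proj s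

@[simp]
lemma koszulContract_apply (f : Koszul k Mt m) (s : Finset (Fin m)) :
    koszulContract θ f s =
      ∑ j ∈ univ.filter (· ∉ s), koszulSign k s j • θ j (f (insert j s)) := by
  simp [koszulContract]

@[simp]
lemma koszulInternal_apply (f : Koszul k Mt m) (s : Finset (Fin m)) :
    koszulInternal d f s = (-1 : k) ^ #s • d (f s) := rfl

lemma koszulD_eq_add : koszulD d θ = koszulContract θ + koszulInternal d := by
  ext f s
  simp [koszulD, koszulSign]

lemma koszulContract_koszulContract
    (hθθ : ∀ (i j : Fin m) (x : Mt), θ i (θ j x) = θ j (θ i x)) (f : Koszul k Mt m) :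
    koszulContract θ (koszulContract θ f) = 0 := by
  funext s
  simp only [koszulContract_apply, map_sum, map_smul, Finset.smul_sum, smul_smul]
  rw [Finset.sum_sigma']
  refine Finset.sum_involution (fun p _ => ⟨p.2, p.1⟩) ?_ ?_ ?_ fun _ _ => rfl
  all_goals rintro ⟨j, i⟩ hp
  all_goals simp only [Finset.mem_sigma, mem_filter, mem_univ, true_and, mem_insert, not_or] at hp
  · rw [hθθ i j, Finset.insert_comm j i s, ← add_smul,
      koszulSign_mul_add_koszulSign_mul hp.2.1 hp.2.2 hp.1, zero_smul]
  · exact fun _ h => hp.2.1 (congrArg Sigma.fst h)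
  · simpa using ⟨hp.2.2, Ne.symm hp.2.1, hp.1⟩

lemma koszulContract_koszulInternal_add (hθd : ∀ (j : Fin m) (x : Mt), d (θ j x) = θ j (d x))
    (f : Koszul k Mt m) :
    koszulContract θ (koszulInternal d f) + koszulInternal d (koszulContract θ f) = 0 := by
  funext s
  simp only [Pi.add_apply, koszulContract_apply, koszulInternal_apply, map_sum, map_smul,
    Finset.smul_sum, hθd, ← Finset.sum_add_distrib, smul_smul, ← add_smul]
  refine Finset.sum_eq_zero fun j hj => ?_
  rw [card_insert_of_notMem (mem_filter.mp hj).2, pow_succ,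
    show ∀ a b : k, a * (b * -1) + b * a = 0 from fun a b => by ring, zero_smul]

lemma koszulInternal_koszulInternal (hdd : ∀ x : Mt, d (d x) = 0) (f : Koszul k Mt m) :
    koszulInternal d (koszulInternal d f) = 0 := by
  funext s
  simp [hdd]

lemma koszulD_koszulD (hdd : ∀ x : Mt, d (d x) = 0)
    (hθd : ∀ (j : Fin m) (x : Mt), d (θ j x) = θ j (d x))
    (hθθ : ∀ (i j : Fin m) (x : Mt), θ i (θ j x) = θ j (θ i x))
    (f : Koszul k Mt m) : koszulD d θ (koszulD d θ f) = 0 := by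
  simp only [koszulD_eq_add, LinearMap.add_apply, map_add, koszulContract_koszulContract θ hθθ,
    koszulInternal_koszulInternal d hdd, zero_add, add_zero]
  rw [add_comm, koszulContract_koszulInternal_add d θ hθd]

end Square

section Grading

variable {gM : ℤ → Submodule k Mt} (d : Mt →ₗ[k] Mt) (θ : Fin m → (Mt →ₗ[k] Mt))

lemma mem_koszulGrading {n : ℤ} {f : Koszul k Mt m} :
    f ∈ koszulGrading gM n ↔ ∀ s : Finset (Fin m), f s ∈ gM (n - #s) := by
  simp [koszulGrading, Submodule.mem_pi]

lemma single_empty_mem_koszulGrading_iff {n : ℤ} {x : Mt} :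
    Pi.single (∅ : Finset (Fin m)) x ∈ koszulGrading gM n ↔ x ∈ gM n := by
  refine ⟨fun h => by simpa using mem_koszulGrading.mp h ∅, fun hx => mem_koszulGrading.mpr
    fun s => ?_⟩
  rcases eq_or_ne s ∅ with rfl | hs
  · simpa using hx
  · simp [hs]

lemma koszulD_mem_koszulGrading (hd : ∀ n : ℤ, ∀ x ∈ gM n, d x ∈ gM (n + 1))
    (hθdeg : ∀ (j : Fin m) (n : ℤ), ∀ x ∈ gM n, θ j x ∈ gM (n + 2))
    {n : ℤ} {f : Koszul k Mt m} (hf : f ∈ koszulGrading gM n) :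
    koszulD d θ f ∈ koszulGrading gM (n + 1) := by
  rw [mem_koszulGrading] at hf ⊢
  intro s
  rw [koszulD_eq_add, LinearMap.add_apply, Pi.add_apply, koszulContract_apply,
    koszulInternal_apply]
  refine add_mem (sum_mem fun j hj => Submodule.smul_mem _ _ ?_) (Submodule.smul_mem _ _ ?_)
  · convert hθdeg j _ _ (hf (insert j s)) using 2
    rw [card_insert_of_notMem (mem_filter.mp hj).2]
    push_cast
    ring
  · convert hd _ _ (hf s) using 2
    ring

lemma koszulD_apply_of_forall_insert {f : Koszul k Mt m} {s : Finset (Fin m)}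
    (hf : ∀ j ∉ s, f (insert j s) = 0) : koszulD d θ f s = (-1 : k) ^ #s • d (f s) := by
  rw [koszulD_eq_add, LinearMap.add_apply, Pi.add_apply, koszulContract_apply, koszulInternal_apply,
    add_eq_right]
  exact sum_eq_zero fun j hj => by rw [hf j (mem_filter.mp hj).2, map_zero, smul_zero]

lemma koszulD_single_empty (x : Mt) :
    koszulD d θ (Pi.single (∅ : Finset (Fin m)) x) = Pi.single ∅ (d x) := by
  funext s
  rw [koszulD_apply_of_forall_insert d θ fun j _ => by simp]
  rcases eq_or_ne s ∅ with rfl | hs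
  · simp
  · simp [hs]

end Grading

section Exactness

variable {gM : ℤ → Submodule k Mt} (d : Mt →ₗ[k] Mt) (θ : Fin m → (Mt →ₗ[k] Mt))

lemma exists_koszulD_eq_of_card_gt
    (hneg : ∀ n : ℤ, n < 0 → ∀ x ∈ gM n, d x = 0 → ∃ y ∈ gM (n - 1), d y = x)
    {n : ℤ} (hn : n ≤ 0) {p : ℕ} {f : Koszul k Mt m} (hf : f ∈ koszulGrading gM n)
    (hDf : ∀ s ≠ ∅, koszulD d θ f s = 0) (htop : ∀ s, p + 1 < #s → f s = 0) :
    ∃ h ∈ koszulGrading gM (n - 1), ∀ s, p < #s → koszulD d θ h s = f s := by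
  have hbound : ∀ s : Finset (Fin m), #s = p + 1 →
      ∃ y ∈ gM (n - 1 - #s), (-1 : k) ^ #s • d y = f s := by
    intro s hs
    have hinsert : ∀ j ∉ s, f (insert j s) = 0 := fun j hj =>
      htop _ (by rw [card_insert_of_notMem hj]; omega)
    have hcocycle : d (f s) = 0 := by
      have := hDf s (by rintro rfl; simp at hs)
      rwa [koszulD_apply_of_forall_insert d θ hinsert,
        (isUnit_neg_one.pow _).smul_eq_zero] at this
    obtain ⟨y, hy, hdy⟩ := hneg _ (by omega) _ (mem_koszulGrading.mp hf s) hcocycle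
    refine ⟨(-1 : k) ^ #s • y, ?_, ?_⟩
    · convert Submodule.smul_mem _ _ hy using 2; ring
    · rw [map_smul, hdy, smul_smul, ← mul_pow, neg_one_mul, neg_neg, one_pow, one_smul]
  choose! y hy hdy using hbound
  refine ⟨fun s => if #s = p + 1 then y s else 0, mem_koszulGrading.mpr fun s => ?_,
    fun s hs => ?_⟩
  · split_ifs with hs
    · exact hy s hs
    · exact zero_mem _
  · rw [koszulD_apply_of_forall_insert d θ fun j hj =>
      if_neg (by rw [card_insert_of_notMem hj]; omega)]
    split_ifs with hs'
    · exact hdy s hs'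
    · rw [map_zero, smul_zero, htop s (by omega)]

lemma exists_sub_koszulD_eq_single
    (hDD : ∀ f, koszulD d θ (koszulD d θ f) = 0)
    (hDmem : ∀ {n : ℤ} {f : Koszul k Mt m}, f ∈ koszulGrading gM n →
      koszulD d θ f ∈ koszulGrading gM (n + 1))
    (hneg : ∀ n : ℤ, n < 0 → ∀ x ∈ gM n, d x = 0 → ∃ y ∈ gM (n - 1), d y = x)
    (n : ℤ) (hn : n ≤ 0) {f : Koszul k Mt m} (hf : f ∈ koszulGrading gM n)
    (hDf : ∀ s ≠ ∅, koszulD d θ f s = 0) :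
    ∃ h ∈ koszulGrading gM (n - 1), ∃ x ∈ gM n, f - koszulD d θ h = Pi.single ∅ x := by
  suffices key : ∀ p : ℕ, ∀ f ∈ koszulGrading gM n,
      (∀ s ≠ ∅, koszulD d θ f s = 0) → (∀ s, p < #s → f s = 0) →
      ∃ h ∈ koszulGrading gM (n - 1), ∀ s ≠ ∅, (f - koszulD d θ h) s = 0 by
    obtain ⟨h, hh, hvan⟩ :=
      key m f hf hDf fun s hs => absurd (card_le_univ s) (by simpa using hs)
    have hsub : f - koszulD d θ h ∈ koszulGrading gM n := sub_mem hf (by simpa using hDmem hh)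
    refine ⟨h, hh, _, by simpa using mem_koszulGrading.mp hsub ∅, funext fun s => ?_⟩
    rcases eq_or_ne s ∅ with rfl | hs
    · simp
    · simp [hs, hvan s hs]
  intro p
  induction p with
  | zero =>
    intro f _ _ hvan
    exact ⟨0, zero_mem _, fun s hs => by
      simpa using hvan s (card_pos.mpr (nonempty_iff_ne_empty.mpr hs))⟩
  | succ p ih =>
    intro f hf hDf htop
    obtain ⟨h₁, hh₁, hDh₁⟩ := exists_koszulD_eq_of_card_gt d θ hneg hn hf hDf htop
    obtain ⟨h₂, hh₂, hvan⟩ :=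
      ih (f - koszulD d θ h₁) (sub_mem hf (by simpa using hDmem hh₁))
        (fun s hs => by simp [hDD, hDf s hs]) (fun s hs => by simp [hDh₁ s hs])
    refine ⟨h₁ + h₂, add_mem hh₁ hh₂, fun s hs => ?_⟩
    simpa [sub_sub] using hvan s hs

end Exactness

theorem koszul_resolution_H0_general
    -- `M` is a `ℤ`-graded `k`-module …
    (gM : ℤ → Submodule k Mt)
    -- … with a degree-`1` differential `d` squaring to zero …
    (d : Mt →ₗ[k] Mt)
    (hd : ∀ n : ℤ, ∀ x ∈ gM n, d x ∈ gM (n + 1))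
    (hdd : ∀ x : Mt, d (d x) = 0)
    -- … and a dg-action of `R = Sym(V^*)`: pairwise commuting degree-`2` operators
    -- `θ_1, …, θ_m` (the actions of a basis of `V^*`) commuting with `d`
    (θ : Fin m → (Mt →ₗ[k] Mt))
    (hθdeg : ∀ (j : Fin m) (n : ℤ), ∀ x ∈ gM n, θ j x ∈ gM (n + 2))
    (hθd : ∀ (j : Fin m) (x : Mt), d (θ j x) = θ j (d x))
    (hθθ : ∀ (i j : Fin m) (x : Mt), θ i (θ j x) = θ j (θ i x))
    -- `H^n(M) = 0` for all `n < 0`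
    (hneg : ∀ n : ℤ, n < 0 → ∀ x ∈ gM n, d x = 0 → ∃ y ∈ gM (n - 1), d y = x) :
    -- conclusion: `x ↦ 1 ⊗ x` induces an isomorphism `H^0(M) ≅ H^0(Λ ⊗_k M)`:
    -- (a) it sends `0`-cocycles of `M` to `0`-cocycles of `Λ ⊗ M`;
    (∀ x : Mt, x ∈ gM 0 → d x = 0 →
      LinearMap.single k (fun _ : Finset (Fin m) => Mt) ∅ x ∈ (koszulGrading gM 0 : Submodule k (Koszul k Mt m)) ∧
      koszulD d θ (LinearMap.single k (fun _ : Finset (Fin m) => Mt) ∅ x) = 0) ∧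
    -- (b) it is injective on `H^0`;
    (∀ x : Mt, x ∈ gM 0 → d x = 0 →
      (∃ g ∈ (koszulGrading gM (-1) : Submodule k (Koszul k Mt m)),
        koszulD d θ g = LinearMap.single k (fun _ : Finset (Fin m) => Mt) ∅ x) →
      ∃ y ∈ gM (-1), d y = x) ∧
    -- (c) it is surjective on `H^0`.
    (∀ f : Koszul k Mt m, f ∈ koszulGrading gM 0 → koszulD d θ f = 0 →
      ∃ x ∈ gM 0, d x = 0 ∧
        ∃ g ∈ (koszulGrading gM (-1) : Submodule k (Koszul k Mt m)),
          koszulD d θ g = f - LinearMap.single k (fun _ : Finset (Fin m) => Mt) ∅ x) := by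
  have hDD := koszulD_koszulD d θ hdd hθd hθθ
  have reduce :=
    exists_sub_koszulD_eq_single d θ hDD (koszulD_mem_koszulGrading d θ hd hθdeg) hneg
  simp only [LinearMap.single_apply]
  refine ⟨fun x hx hdx => ⟨single_empty_mem_koszulGrading_iff.mpr hx,
    by rw [koszulD_single_empty, hdx, Pi.single_zero]⟩, ?_, ?_⟩
  · rintro x - - ⟨g, hg, hDg⟩
    obtain ⟨h, -, y, hy, hgy⟩ := reduce (-1) (by norm_num) hg fun s hs => by simp [hDg, hs]
    refine ⟨y, hy, (Pi.single_inj (M := fun _ : Finset (Fin m) => Mt) ∅).mp ?_⟩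
    rw [← koszulD_single_empty, ← hgy, map_sub, hDD, sub_zero, hDg]
  · intro f hf hDf
    obtain ⟨h, hh, x, hx, hfx⟩ := reduce 0 le_rfl hf fun s _ => by simp [hDf]
    refine ⟨x, hx, (Pi.single_inj (M := fun _ : Finset (Fin m) => Mt) ∅).mp ?_,
      h, hh, by rw [← hfx, sub_sub_cancel]⟩
    rw [← koszulD_single_empty, ← hfx, map_sub, hDD, hDf, sub_zero, Pi.single_zero]

theorem koszul_resolution_H0
    -- `M` is a `ℤ`-graded `k`-module …
    (gM : ℤ → Submodule k Mt)
    (hinternal : DirectSum.IsInternal fun n : ℤ => gM n)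
    -- … with a degree-`1` differential `d` squaring to zero …
    (d : Mt →ₗ[k] Mt)
    (hd : ∀ n : ℤ, ∀ x ∈ gM n, d x ∈ gM (n + 1))
    (hdd : ∀ x : Mt, d (d x) = 0)
    -- … and a dg-action of `R = Sym(V^*)`: pairwise commuting degree-`2` operators
    -- `θ_1, …, θ_m` (the actions of a basis of `V^*`) commuting with `d`
    (θ : Fin m → (Mt →ₗ[k] Mt))
    (hθdeg : ∀ (j : Fin m) (n : ℤ), ∀ x ∈ gM n, θ j x ∈ gM (n + 2))
    (hθd : ∀ (j : Fin m) (x : Mt), d (θ j x) = θ j (d x))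
    (hθθ : ∀ (i j : Fin m) (x : Mt), θ i (θ j x) = θ j (θ i x))
    -- `H^n(M) = 0` for all `n < 0`
    (hneg : ∀ n : ℤ, n < 0 → ∀ x ∈ gM n, d x = 0 → ∃ y ∈ gM (n - 1), d y = x) :
    -- conclusion: `x ↦ 1 ⊗ x` induces an isomorphism `H^0(M) ≅ H^0(Λ ⊗_k M)`:
    -- (a) it sends `0`-cocycles of `M` to `0`-cocycles of `Λ ⊗ M`;
    (∀ x : Mt, x ∈ gM 0 → d x = 0 →
      LinearMap.single k (fun _ : Finset (Fin m) => Mt) ∅ x ∈ (koszulGrading gM 0 : Submodule k (Koszul k Mt m)) ∧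
      koszulD d θ (LinearMap.single k (fun _ : Finset (Fin m) => Mt) ∅ x) = 0) ∧
    -- (b) it is injective on `H^0`;
    (∀ x : Mt, x ∈ gM 0 → d x = 0 →
      (∃ g ∈ (koszulGrading gM (-1) : Submodule k (Koszul k Mt m)),
        koszulD d θ g = LinearMap.single k (fun _ : Finset (Fin m) => Mt) ∅ x) →
      ∃ y ∈ gM (-1), d y = x) ∧
    -- (c) it is surjective on `H^0`.
    (∀ f : Koszul k Mt m, f ∈ koszulGrading gM 0 → koszulD d θ f = 0 →
      ∃ x ∈ gM 0, d x = 0 ∧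
        ∃ g ∈ (koszulGrading gM (-1) : Submodule k (Koszul k Mt m)),
          koszulD d θ g = f - LinearMap.single k (fun _ : Finset (Fin m) => Mt) ∅ x) :=
  koszul_resolution_H0_general gM d hd hdd θ hθdeg hθd hθθ hneg
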